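/- If Γ <: Δ (pointwise subtyping of contexts with equal domains), Δ ⊳ N : A is derivable, and A <: B, then Γ ⊳ N : B is derivable. -/
import Mathlib


open scoped Classical

/-! ## Types of the quantum lambda calculus -/

inductive QType : Type
  | const  : ℕ → QType
  | tvar   : ℕ → QType
  | bang   : QType → QType
  | lolli  : QType → QType → QType
  | top    : QType
  | tensor : QType → QType → QType
  deriving DecidableEq

/-- `nbang n A` is `!^n A`. -/
def nbang : ℕ → QType → QType
  | 0, A => A
  | n + 1, A => QType.bang (nbang n A)

/-- The subtyping relation `A <: B`. -/
inductive QSub : QType → QType → Prop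
  | const (a : ℕ) : QSub (.const a) (.const a)
  | tvar (X : ℕ) : QSub (.tvar X) (.tvar X)
  | top : QSub .top .top
  | derelict {A B : QType} : QSub A B → QSub (.bang A) B
  | promote {A B : QType} : QSub (.bang A) B → QSub (.bang A) (.bang B)
  | tensor {A₁ A₂ B₁ B₂ : QType} : QSub A₁ B₁ → QSub A₂ B₂ →
      QSub (.tensor A₁ A₂) (.tensor B₁ B₂)
  | lolli {A A' B B' : QType} : QSub A A' → QSub B B' →
      QSub (.lolli A' B) (.lolli A B')

/-- The compact ("second set") subtyping rules. -/
inductive QSub2 : QType → QType → Prop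
  | tvar {n m : ℕ} (X : ℕ) : (m = 0 ∨ 1 ≤ n) →
      QSub2 (nbang n (.tvar X)) (nbang m (.tvar X))
  | const {n m : ℕ} (a : ℕ) : (m = 0 ∨ 1 ≤ n) →
      QSub2 (nbang n (.const a)) (nbang m (.const a))
  | top {n m : ℕ} : (m = 0 ∨ 1 ≤ n) →
      QSub2 (nbang n .top) (nbang m .top)
  | tensor {n m : ℕ} {A₁ A₂ B₁ B₂ : QType} : (m = 0 ∨ 1 ≤ n) →
      QSub2 A₁ B₁ → QSub2 A₂ B₂ →
      QSub2 (nbang n (.tensor A₁ A₂)) (nbang m (.tensor B₁ B₂))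
  | lolli {n m : ℕ} {A A' B B' : QType} : (m = 0 ∨ 1 ≤ n) →
      QSub2 A A' → QSub2 B B' →
      QSub2 (nbang n (.lolli A' B)) (nbang m (.lolli A B'))

/-! ## Intuitionistic types, skeleton, lifting, decoration -/

inductive IType : Type
  | const : ℕ → IType
  | tvar  : ℕ → IType
  | arrow : IType → IType → IType
  | prod  : IType → IType → IType
  | top   : IType
  deriving DecidableEq

/-- Skeleton `†A`: erase all `!`. -/
def skel : QType → IType
  | .const a => .const a
  | .tvar X => .tvar X
  | .bang A => skel A
  | .lolli A B => .arrow (skel A) (skel B)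
  | .top => .top
  | .tensor A B => .prod (skel A) (skel B)

/-- Lifting `♣U`: the `!`-free quantum type with skeleton `U`. -/
def lift : IType → QType
  | .const a => .const a
  | .tvar X => .tvar X
  | .arrow U V => .lolli (lift U) (lift V)
  | .prod U V => .tensor (lift U) (lift V)
  | .top => .top

/-- Decoration `U ↬ A`. -/
def dec : IType → QType → QType
  | U, .bang A => .bang (dec U A)
  | .arrow U V, .lolli A B => .lolli (dec U A) (dec V B)
  | .prod U V, .tensor A B => .tensor (dec U A) (dec V B)
  | U, _ => lift U

/-! ## Terms -/

inductive Term : Type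
  | var : ℕ → Term
  | app : Term → Term → Term
  | lam : ℕ → Term → Term
  | ite : Term → Term → Term → Term
  | bit0 : Term
  | bit1 : Term
  | meas : Term
  | new : Term
  | unitary : ℕ → ℕ → Term   -- arity, index of the gate
  | star : Term
  | pair : Term → Term → Term
  | letp : ℕ → ℕ → Term → Term → Term
  deriving DecidableEq

/-- Free variables. -/
def FV : Term → Finset ℕ
  | .var x => {x}
  | .app M N => FV M ∪ FV N
  | .lam x M => FV M \ {x}
  | .ite P M N => FV P ∪ FV M ∪ FV N
  | .pair M N => FV M ∪ FV N
  | .letp x y M N => FV M ∪ (FV N \ {x, y})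
  | _ => ∅

/-- Values. -/
inductive IsValue : Term → Prop
  | var (x : ℕ) : IsValue (.var x)
  | lam (x : ℕ) (M : Term) : IsValue (.lam x M)
  | bit0 : IsValue .bit0
  | bit1 : IsValue .bit1
  | meas : IsValue .meas
  | new : IsValue .new
  | unitary (n k : ℕ) : IsValue (.unitary n k)
  | star : IsValue .star
  | pair {V W : Term} : IsValue V → IsValue W → IsValue (.pair V W)

/-- Substitution `M[V/x]` (terms are identified up to α-equivalence, so
substitution does not descend under a binder for `x`). -/
def subst (V : Term) (x : ℕ) : Term → Term
  | .var y => if y = x then V else .var y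
  | .app M N => .app (subst V x M) (subst V x N)
  | .lam y M => if y = x then .lam y M else .lam y (subst V x M)
  | .ite P M N => .ite (subst V x P) (subst V x M) (subst V x N)
  | .pair M N => .pair (subst V x M) (subst V x N)
  | .letp y z M N =>
      .letp y z (subst V x M) (if y = x ∨ z = x then N else subst V x N)
  | M => M

/-! ## Typing contexts -/

def Ctx : Type := ℕ → Option QType

def Ctx.Disj (Γ Δ : Ctx) : Prop := ∀ x, Γ x = none ∨ Δ x = none

def Ctx.union (Γ Δ : Ctx) : Ctx := fun x => (Γ x).orElse (fun _ => Δ x)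

/-- A context of the form `!Δ`: every declared type is exponential. -/
def Ctx.IsExp (Δ : Ctx) : Prop := ∀ x A, Δ x = some A → ∃ B, A = QType.bang B

def Ctx.extend (Γ : Ctx) (x : ℕ) (A : QType) : Ctx :=
  fun y => if y = x then some A else Γ y

/-- Pointwise subtyping of contexts with equal domains. -/
def Ctx.SubCtx (Γ Δ : Ctx) : Prop :=
  (∀ x, (Γ x).isSome ↔ (Δ x).isSome) ∧
  (∀ x A B, Γ x = some A → Δ x = some B → _root_.QSub A B)

/-! ## Base types and types of constants -/

def bitT : QType := .const 0
def qbitT : QType := .const 1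

/-- `qbit^n`, the `n`-fold tensor power of `qbit`. -/
def qbits : ℕ → QType
  | 0 => .top
  | 1 => qbitT
  | n + 2 => .tensor qbitT (qbits (n + 1))

/-! ## Typing rules of the quantum lambda calculus -/

inductive Types : Ctx → Term → QType → Prop
  | ax_var {Γ : Ctx} {x : ℕ} {A B : QType} :
      Γ x = some A → QSub A B → Types Γ (.var x) B
  | ax_bit0 {Γ : Ctx} {B : QType} :
      QSub (.bang bitT) B → Types Γ .bit0 B
  | ax_bit1 {Γ : Ctx} {B : QType} :
      QSub (.bang bitT) B → Types Γ .bit1 B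
  | ax_meas {Γ : Ctx} {B : QType} :
      QSub (.bang (.lolli qbitT (.bang bitT))) B → Types Γ .meas B
  | ax_new {Γ : Ctx} {B : QType} :
      QSub (.bang (.lolli bitT qbitT)) B → Types Γ .new B
  | ax_unitary {Γ : Ctx} {n k : ℕ} {B : QType} :
      QSub (.bang (.lolli (qbits n) (qbits n))) B → Types Γ (.unitary n k) B
  | ite_ {Γ₁ Γ₂ Δ : Ctx} {P M N : Term} {A : QType} :
      Δ.IsExp → Γ₁.Disj Γ₂ → Γ₁.Disj Δ → Γ₂.Disj Δ →
      Types (Γ₁.union Δ) P bitT →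
      Types (Γ₂.union Δ) M A → Types (Γ₂.union Δ) N A →
      Types ((Γ₁.union Γ₂).union Δ) (.ite P M N) A
  | app_ {Γ₁ Γ₂ Δ : Ctx} {M N : Term} {A B : QType} :
      Δ.IsExp → Γ₁.Disj Γ₂ → Γ₁.Disj Δ → Γ₂.Disj Δ →
      Types (Γ₁.union Δ) M (.lolli A B) →
      Types (Γ₂.union Δ) N A →
      Types ((Γ₁.union Γ₂).union Δ) (.app M N) B
  | lam₁ {Δ : Ctx} {x : ℕ} {M : Term} {A B : QType} :
      Δ x = none →
      Types (Δ.extend x A) M B →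
      Types Δ (.lam x M) (.lolli A B)
  | lam₂ {Γ Δ : Ctx} {x : ℕ} {M : Term} {A B : QType} {n : ℕ} :
      Δ.IsExp → Γ.Disj Δ → (Γ.union Δ) x = none →
      (∀ y ∈ FV M, Γ y = none) →
      Types ((Γ.union Δ).extend x A) M B →
      Types (Γ.union Δ) (.lam x M) (nbang (n + 1) (.lolli A B))
  | tens_I {Γ₁ Γ₂ Δ : Ctx} {M₁ M₂ : Term} {A₁ A₂ : QType} {n : ℕ} :
      Δ.IsExp → Γ₁.Disj Γ₂ → Γ₁.Disj Δ → Γ₂.Disj Δ →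
      Types (Γ₁.union Δ) M₁ (nbang n A₁) →
      Types (Γ₂.union Δ) M₂ (nbang n A₂) →
      Types ((Γ₁.union Γ₂).union Δ) (.pair M₁ M₂) (nbang n (.tensor A₁ A₂))
  | top_ {Δ : Ctx} {n : ℕ} : Types Δ .star (nbang n .top)
  | tens_E {Γ₁ Γ₂ Δ : Ctx} {x₁ x₂ : ℕ} {M N : Term} {A A₁ A₂ : QType} {n : ℕ} :
      Δ.IsExp → Γ₁.Disj Γ₂ → Γ₁.Disj Δ → Γ₂.Disj Δ →
      x₁ ≠ x₂ → (Γ₂.union Δ) x₁ = none → (Γ₂.union Δ) x₂ = none →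
      Types (Γ₁.union Δ) M (nbang n (.tensor A₁ A₂)) →
      Types (((Γ₂.union Δ).extend x₁ (nbang n A₁)).extend x₂ (nbang n A₂)) N A →
      Types ((Γ₁.union Γ₂).union Δ) (.letp x₁ x₂ M N) A

/-! ## Simply-typed lambda calculus (skeleton system) -/

def ICtx : Type := ℕ → Option IType

def ICtx.extend (Γ : ICtx) (x : ℕ) (U : IType) : ICtx :=
  fun y => if y = x then some U else Γ y

def skelCtx (Δ : Ctx) : ICtx := fun x => (Δ x).map skel

inductive SimpTypes : ICtx → Term → IType → Prop
  | var {Γ : ICtx} {x : ℕ} {U : IType} :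
      Γ x = some U → SimpTypes Γ (.var x) U
  | bit0 {Γ : ICtx} : SimpTypes Γ .bit0 (skel (.bang bitT))
  | bit1 {Γ : ICtx} : SimpTypes Γ .bit1 (skel (.bang bitT))
  | meas {Γ : ICtx} : SimpTypes Γ .meas (skel (.bang (.lolli qbitT (.bang bitT))))
  | new {Γ : ICtx} : SimpTypes Γ .new (skel (.bang (.lolli bitT qbitT)))
  | unitary {Γ : ICtx} {n k : ℕ} :
      SimpTypes Γ (.unitary n k) (skel (.bang (.lolli (qbits n) (qbits n))))
  | ite_ {Γ : ICtx} {P M N : Term} {U : IType} :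
      SimpTypes Γ P (skel bitT) → SimpTypes Γ M U → SimpTypes Γ N U →
      SimpTypes Γ (.ite P M N) U
  | app_ {Γ : ICtx} {M N : Term} {U V : IType} :
      SimpTypes Γ M (.arrow U V) → SimpTypes Γ N U →
      SimpTypes Γ (.app M N) V
  | lam {Γ : ICtx} {x : ℕ} {M : Term} {U V : IType} :
      SimpTypes (Γ.extend x U) M V → SimpTypes Γ (.lam x M) (.arrow U V)
  | pair {Γ : ICtx} {M N : Term} {U V : IType} :
      SimpTypes Γ M U → SimpTypes Γ N V → SimpTypes Γ (.pair M N) (.prod U V)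
  | star {Γ : ICtx} : SimpTypes Γ .star .top
  | letp {Γ : ICtx} {x₁ x₂ : ℕ} {M N : Term} {U₁ U₂ U : IType} :
      SimpTypes Γ M (.prod U₁ U₂) →
      SimpTypes ((Γ.extend x₁ U₁).extend x₂ U₂) N U →
      SimpTypes Γ (.letp x₁ x₂ M N) U

/-- Pointwise decoration of a context along another context. -/
def decCtx (Δ : ICtx) (Γ : Ctx) : Ctx := fun x =>
  match Δ x, Γ x with
  | some U, some A => some (dec U A)
  | _, _ => none

/-! ## Probabilistic reduction systems -/

structure PRS where
  X : Type
  val : Set X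
  R : X → X → Prop
  prob : X → X → ℝ
  val_no_red : ∀ x ∈ val, ∀ y, ¬ R x y
  prob_nonneg : ∀ x y, 0 ≤ prob x y
  prob_le_one : ∀ x y, prob x y ≤ 1
  prob_zero : ∀ x y, ¬ R x y → prob x y = 0
  fin : ∀ x, {y | R x y}.Finite
  sum_le_one : ∀ x, ∑' y, prob x y ≤ 1

/-- `n`-step reduction probabilities. -/
noncomputable def PRS.probN (S : PRS) : ℕ → S.X → S.X → ℝ
  | 0, x, y => if x = y then 1 else 0
  | n + 1, x, y => ∑' z, S.prob x z * S.probN n z y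

/-- The probability of reaching a value state from `x`. -/
noncomputable def PRS.probU (S : PRS) (x : S.X) : ℝ :=
  ∑' (n : ℕ), ∑' (u : S.X), if u ∈ S.val then S.probN n x u else 0

/-- The probability of divergence from `x` (the limit of the total remaining
mass, which is non-increasing, hence equals the infimum). -/
noncomputable def PRS.probInfty (S : PRS) (x : S.X) : ℝ :=
  ⨅ n : ℕ, ∑' y, S.probN n x y

/-- `n`-step probabilities in the "remaining mass" sense: value states reduce
to themselves with probability `1`. -/
noncomputable def PRS.probN' (S : PRS) : ℕ → S.X → S.X → ℝ
  | 0, x, y => if x = y then 1 else 0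
  | n + 1, x, y =>
      if x ∈ S.val then (if x = y then 1 else 0)
      else ∑' z, S.prob x z * S.probN' n z y

/-- Error states. -/
def PRS.IsError (S : PRS) (e : S.X) : Prop :=
  e ∉ S.val ∧ ∑' y, S.prob e y < 1

/-- Consistency: no error state is reachable. -/
def PRS.Consistent (S : PRS) (x : S.X) : Prop :=
  ∀ e, Relation.ReflTransGen S.R x e → ¬ S.IsError e


/-! ### Auxiliary lemmas for `types_sub` -/

theorem qsub_refl : ∀ A : QType, QSub A A
  | .const a => .const a
  | .tvar X => .tvar X
  | .top => .top
  | .bang A => .promote (.derelict (qsub_refl A))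
  | .lolli A B => .lolli (qsub_refl A) (qsub_refl B)
  | .tensor A B => .tensor (qsub_refl A) (qsub_refl B)

theorem qsub_trans : ∀ {A B C : QType}, QSub A B → QSub B C → QSub A C := by
  intro A B C h1 h2
  cases h1 with
  | const => exact h2
  | tvar => exact h2
  | top => exact h2
  | derelict h => exact .derelict (qsub_trans h h2)
  | promote h =>
      cases h2 with
      | derelict h2' => exact qsub_trans h h2'
      | promote h2' => exact .promote (qsub_trans (QSub.promote h) h2')
  | tensor hA hB =>
      cases h2 with
      | tensor hA' hB' => exact .tensor (qsub_trans hA hA') (qsub_trans hB hB')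
  | lolli hA hB =>
      cases h2 with
      | lolli hA' hB' => exact .lolli (qsub_trans hA' hA) (qsub_trans hB hB')
termination_by A B C => sizeOf A + sizeOf B + sizeOf C
decreasing_by all_goals (subst_vars; first | (simp; omega) | simp | omega)

theorem qsub_derelict_n {A B : QType} (h : QSub A B) : ∀ n, QSub (nbang n A) B
  | 0 => h
  | n + 1 => .derelict (qsub_derelict_n h n)

theorem nbang_sub {A B : QType} (h : QSub A B) :
    ∀ {m n : ℕ}, (m = 0 ∨ 1 ≤ n) → QSub (nbang n A) (nbang m B) := by
  intro m
  induction m with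
  | zero => intro n _; exact qsub_derelict_n h n
  | succ k ih =>
      intro n hc
      rcases hc with hc | hc
      · omega
      · obtain ⟨j, rfl⟩ : ∃ j, n = j + 1 := ⟨n - 1, by omega⟩
        exact QSub.promote (ih (n := j + 1) (Or.inr (by omega)))

theorem qsub_lolli_inv : ∀ {S C : QType}, QSub S C → ∀ {n : ℕ} {A B : QType},
    S = nbang n (.lolli A B) →
    ∃ m A' B', C = nbang m (.lolli A' B') ∧ (m = 0 ∨ 1 ≤ n) ∧ QSub A' A ∧ QSub B B' := by
  intro S C h
  induction h with
  | const a => intro n A B hS; cases n <;> simp [nbang] at hS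
  | tvar X => intro n A B hS; cases n <;> simp [nbang] at hS
  | top => intro n A B hS; cases n <;> simp [nbang] at hS
  | tensor h1 h2 ih1 ih2 => intro n A B hS; cases n <;> simp [nbang] at hS
  | lolli h1 h2 =>
      intro n A B hS
      cases n with
      | zero =>
          simp only [nbang] at hS
          cases hS
          exact ⟨0, _, _, rfl, Or.inl rfl, h1, h2⟩
      | succ k => simp [nbang] at hS
  | derelict h ih =>
      intro n A B hS
      cases n with
      | zero => simp [nbang] at hS
      | succ k =>
          simp only [nbang, QType.bang.injEq] at hS
          obtain ⟨m, A', B', rfl, hc, h1, h2⟩ := ih hS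
          exact ⟨m, A', B', rfl, by omega, h1, h2⟩
  | promote h ih =>
      intro n A B hS
      cases n with
      | zero => simp [nbang] at hS
      | succ k =>
          obtain ⟨m, A', B', rfl, hc, h1, h2⟩ := ih hS
          exact ⟨m + 1, A', B', rfl, by omega, h1, h2⟩

theorem qsub_tensor_inv : ∀ {S C : QType}, QSub S C → ∀ {n : ℕ} {A₁ A₂ : QType},
    S = nbang n (.tensor A₁ A₂) →
    ∃ m B₁ B₂, C = nbang m (.tensor B₁ B₂) ∧ (m = 0 ∨ 1 ≤ n) ∧ QSub A₁ B₁ ∧ QSub A₂ B₂ := by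
  intro S C h
  induction h with
  | const a => intro n A₁ A₂ hS; cases n <;> simp [nbang] at hS
  | tvar X => intro n A₁ A₂ hS; cases n <;> simp [nbang] at hS
  | top => intro n A₁ A₂ hS; cases n <;> simp [nbang] at hS
  | lolli h1 h2 ih1 ih2 => intro n A₁ A₂ hS; cases n <;> simp [nbang] at hS
  | tensor h1 h2 =>
      intro n A₁ A₂ hS
      cases n with
      | zero =>
          simp only [nbang] at hS
          cases hS
          exact ⟨0, _, _, rfl, Or.inl rfl, h1, h2⟩
      | succ k => simp [nbang] at hS
  | derelict h ih =>
      intro n A₁ A₂ hS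
      cases n with
      | zero => simp [nbang] at hS
      | succ k =>
          simp only [nbang, QType.bang.injEq] at hS
          obtain ⟨m, B₁, B₂, rfl, hc, h1, h2⟩ := ih hS
          exact ⟨m, B₁, B₂, rfl, by omega, h1, h2⟩
  | promote h ih =>
      intro n A₁ A₂ hS
      cases n with
      | zero => simp [nbang] at hS
      | succ k =>
          obtain ⟨m, B₁, B₂, rfl, hc, h1, h2⟩ := ih hS
          exact ⟨m + 1, B₁, B₂, rfl, by omega, h1, h2⟩

theorem qsub_top_inv : ∀ {S C : QType}, QSub S C → ∀ {n : ℕ},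
    S = nbang n .top → ∃ m, C = nbang m .top := by
  intro S C h
  induction h with
  | const a => intro n hS; cases n <;> simp [nbang] at hS
  | tvar X => intro n hS; cases n <;> simp [nbang] at hS
  | lolli h1 h2 ih1 ih2 => intro n hS; cases n <;> simp [nbang] at hS
  | tensor h1 h2 ih1 ih2 => intro n hS; cases n <;> simp [nbang] at hS
  | top => intro n hS; exact ⟨0, rfl⟩
  | derelict h ih =>
      intro n hS
      cases n with
      | zero => simp [nbang] at hS
      | succ k =>
          simp only [nbang, QType.bang.injEq] at hS
          exact ih hS
  | promote h ih =>
      intro n hS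
      cases n with
      | zero => simp [nbang] at hS
      | succ k =>
          obtain ⟨m, rfl⟩ := ih hS
          exact ⟨m + 1, rfl⟩

theorem qsub_bang_right : ∀ {A B : QType}, QSub A (.bang B) → ∃ A', A = .bang A' := by
  intro A B h
  cases h with
  | derelict h => exact ⟨_, rfl⟩
  | promote h => exact ⟨_, rfl⟩

/-! ### Context lemmas -/

theorem union_some_left {Γ Δ : Ctx} {x : ℕ} {A : QType} (h : Γ x = some A) :
    (Γ.union Δ) x = some A := by simp [Ctx.union, h]

theorem union_none_left {Γ Δ : Ctx} {x : ℕ} (h : Γ x = none) :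
    (Γ.union Δ) x = Δ x := by simp [Ctx.union, h]

theorem union_isSome {Γ Δ : Ctx} (x : ℕ) :
    ((Γ.union Δ) x).isSome ↔ (Γ x).isSome ∨ (Δ x).isSome := by
  cases h : Γ x with
  | some A => rw [union_some_left h]; simp
  | none => rw [union_none_left h]; simp [h]

def Ctx.restrict (Γ' S : Ctx) : Ctx := fun x => if (S x).isSome then Γ' x else none

theorem subctx_none {Γ' Γ : Ctx} (h : Γ'.SubCtx Γ) {x : ℕ} (hx : Γ x = none) :
    Γ' x = none := by
  have := h.1 x
  cases hΓ' : Γ' x with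
  | none => rfl
  | some A => rw [hΓ', hx] at this; simp at this

theorem subctx_some {Γ' Γ : Ctx} (h : Γ'.SubCtx Γ) {x : ℕ} {A : QType}
    (hx : Γ x = some A) : ∃ A', Γ' x = some A' ∧ QSub A' A := by
  have h1 : (Γ' x).isSome := (h.1 x).mpr (by rw [hx]; rfl)
  obtain ⟨A', hA'⟩ := Option.isSome_iff_exists.mp h1
  exact ⟨A', hA', h.2 x _ _ hA' hx⟩

theorem subctx_extend {Γ' Γ : Ctx} (h : Γ'.SubCtx Γ) {x : ℕ} {A' A : QType}
    (hA : QSub A' A) : (Γ'.extend x A').SubCtx (Γ.extend x A) := by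
  constructor
  · intro y
    by_cases hy : y = x <;> simp [Ctx.extend, hy, h.1 y]
  · intro y A₁ A₂ h1 h2
    by_cases hy : y = x <;> simp [Ctx.extend, hy] at h1 h2
    · cases h1; cases h2; exact hA
    · exact h.2 y _ _ h1 h2

theorem subctx_union {Γ₀ Γ Δ₀ Δ : Ctx} (h1 : Γ₀.SubCtx Γ) (h2 : Δ₀.SubCtx Δ) :
    (Γ₀.union Δ₀).SubCtx (Γ.union Δ) := by
  constructor
  · intro x
    rw [union_isSome, union_isSome, h1.1 x, h2.1 x]
  · intro x A₁ A₂ ha hb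
    cases hΓ : Γ₀ x with
    | some C =>
        rw [union_some_left hΓ] at ha
        cases ha
        obtain ⟨D, hD⟩ := Option.isSome_iff_exists.mp ((h1.1 x).mp (by rw [hΓ]; rfl))
        rw [union_some_left hD] at hb
        cases hb
        exact h1.2 x _ _ hΓ hD
    | none =>
        have hΓ' : Γ x = none := by
          cases hg : Γ x with
          | none => rfl
          | some C =>
              have := (h1.1 x).mpr (by rw [hg]; rfl)
              rw [hΓ] at this; simp at this
        rw [union_none_left hΓ] at ha
        rw [union_none_left hΓ'] at hb
        exact h2.2 x _ _ ha hb

theorem restrict_disj {S Δ : Ctx} (h : S.Disj Δ) (Γ' Γ'' : Ctx) :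
    (Γ'.restrict S).Disj (Γ''.restrict Δ) := by
  intro x
  rcases h x with h | h
  · left; simp [Ctx.restrict, h]
  · right; simp [Ctx.restrict, h]

theorem restrict_none {Γ' Δ : Ctx} {x : ℕ} (h : Δ x = none) : (Γ'.restrict Δ) x = none := by
  simp [Ctx.restrict, h]

theorem subctx_split {Γ' S Δ : Ctx} (hd : S.Disj Δ) (h : Γ'.SubCtx (S.union Δ)) :
    Γ' = (Γ'.restrict S).union (Γ'.restrict Δ) ∧
    (Γ'.restrict S).SubCtx S ∧ (Γ'.restrict Δ).SubCtx Δ := by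
  have hdom : ∀ x, (Γ' x).isSome ↔ ((S x).isSome ∨ (Δ x).isSome) := by
    intro x; rw [h.1 x, union_isSome]
  refine ⟨?_, ⟨?_, ?_⟩, ⟨?_, ?_⟩⟩
  · funext x
    by_cases hS : (S x).isSome
    · have heq : (Γ'.restrict S) x = Γ' x := by simp [Ctx.restrict, hS]
      obtain ⟨C, hC⟩ := Option.isSome_iff_exists.mp ((hdom x).mpr (Or.inl hS))
      rw [hC]
      exact (union_some_left (heq.trans hC)).symm
    · have h1 : (Γ'.restrict S) x = none := by
        simp [Ctx.restrict, hS]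
      rw [union_none_left h1]
      by_cases hΔ : (Δ x).isSome
      · simp [Ctx.restrict, hΔ]
      · have : Γ' x = none := by
          cases hΓ : Γ' x with
          | none => rfl
          | some C =>
              exfalso
              rcases (hdom x).mp (by rw [hΓ]; rfl) with h' | h'
              exacts [hS h', hΔ h']
        simp [Ctx.restrict, this]
  · intro x
    constructor
    · intro hx
      simp only [Ctx.restrict] at hx
      by_cases hS : (S x).isSome
      · exact hS
      · simp [hS] at hx
    · intro hx
      simp only [Ctx.restrict, hx, if_true]
      exact (hdom x).mpr (Or.inl hx)
  · intro x A₁ A₂ h1 h2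
    simp only [Ctx.restrict] at h1
    rw [h2] at h1; simp at h1
    exact h.2 x _ _ h1 (union_some_left h2)
  · intro x
    constructor
    · intro hx
      simp only [Ctx.restrict] at hx
      by_cases hΔ : (Δ x).isSome
      · exact hΔ
      · simp [hΔ] at hx
    · intro hx
      simp only [Ctx.restrict, hx, if_true]
      exact (hdom x).mpr (Or.inr hx)
  · intro x A₁ A₂ h1 h2
    simp only [Ctx.restrict] at h1
    rw [h2] at h1; simp at h1
    have hS : S x = none := by
      rcases hd x with h0 | h0
      · exact h0
      · rw [h0] at h2; cases h2
    refine h.2 x _ _ h1 ?_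
    rw [union_none_left hS]; exact h2

theorem restrict_isExp {Γ' Δ : Ctx} (hE : Δ.IsExp) (hs : (Γ'.restrict Δ).SubCtx Δ) :
    (Γ'.restrict Δ).IsExp := by
  intro x A hA
  have hΔ : (Δ x).isSome := (hs.1 x).mp (by rw [hA]; rfl)
  obtain ⟨C, hC⟩ := Option.isSome_iff_exists.mp hΔ
  obtain ⟨D, rfl⟩ := hE x C hC
  exact qsub_bang_right (hs.2 x _ _ hA hC)

theorem disj_union_left {Γ₁ Γ₂ Δ : Ctx} (h1 : Γ₁.Disj Δ) (h2 : Γ₂.Disj Δ) :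
    (Γ₁.union Γ₂).Disj Δ := by
  intro x
  rcases h1 x with h | h
  · rcases h2 x with h' | h'
    · left; rw [union_none_left h]; exact h'
    · right; exact h'
  · right; exact h

theorem types_sub_aux {Δ : Ctx} {N : Term} {A : QType} (h : Types Δ N A) :
    ∀ {Γ : Ctx} {B : QType}, Γ.SubCtx Δ → QSub A B → Types Γ N B := by
  induction h with
  | ax_var hx hs =>
      intro Γ B hctx hAB
      obtain ⟨A', hA', hsub⟩ := subctx_some hctx hx
      exact .ax_var hA' (qsub_trans hsub (qsub_trans hs hAB))
  | ax_bit0 hs => intro Γ B hctx hAB; exact .ax_bit0 (qsub_trans hs hAB)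
  | ax_bit1 hs => intro Γ B hctx hAB; exact .ax_bit1 (qsub_trans hs hAB)
  | ax_meas hs => intro Γ B hctx hAB; exact .ax_meas (qsub_trans hs hAB)
  | ax_new hs => intro Γ B hctx hAB; exact .ax_new (qsub_trans hs hAB)
  | ax_unitary hs => intro Γ B hctx hAB; exact .ax_unitary (qsub_trans hs hAB)
  | ite_ hE h12 h1D h2D hP hM hN ihP ihM ihN =>
      intro Γ B hctx hAB
      obtain ⟨hEq, hsub12, hsubD⟩ := subctx_split (disj_union_left h1D h2D) hctx
      obtain ⟨hEq2, hsub1, hsub2⟩ := subctx_split h12 hsub12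
      rw [hEq, hEq2]
      exact Types.ite_ (restrict_isExp hE hsubD) (restrict_disj h12 _ _)
        (restrict_disj h1D _ _) (restrict_disj h2D _ _)
        (ihP (subctx_union hsub1 hsubD) (qsub_refl _))
        (ihM (subctx_union hsub2 hsubD) hAB)
        (ihN (subctx_union hsub2 hsubD) hAB)
  | app_ hE h12 h1D h2D hM hN ihM ihN =>
      intro Γ B hctx hAB
      obtain ⟨hEq, hsub12, hsubD⟩ := subctx_split (disj_union_left h1D h2D) hctx
      obtain ⟨hEq2, hsub1, hsub2⟩ := subctx_split h12 hsub12
      rw [hEq, hEq2]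
      exact Types.app_ (restrict_isExp hE hsubD) (restrict_disj h12 _ _)
        (restrict_disj h1D _ _) (restrict_disj h2D _ _)
        (ihM (subctx_union hsub1 hsubD) (QSub.lolli (qsub_refl _) hAB))
        (ihN (subctx_union hsub2 hsubD) (qsub_refl _))
  | lam₁ hx hM ihM =>
      intro Γ B hctx hAB
      obtain ⟨m, A', B', rfl, hc, hA', hB'⟩ := qsub_lolli_inv hAB (n := 0) rfl
      obtain rfl : m = 0 := by omega
      exact .lam₁ (subctx_none hctx hx) (ihM (subctx_extend hctx hA') hB')
  | lam₂ hE hDisj hx hFV hM ihM =>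
      intro Γ B hctx hAB
      obtain ⟨m, A', B', rfl, hc, hA', hB'⟩ := qsub_lolli_inv hAB rfl
      cases m with
      | zero =>
          exact .lam₁ (subctx_none hctx hx) (ihM (subctx_extend hctx hA') hB')
      | succ k =>
          obtain ⟨hEq, hsubΓ, hsubD⟩ := subctx_split hDisj hctx
          rw [hEq]
          refine Types.lam₂ (n := k) (restrict_isExp hE hsubD)
            (restrict_disj hDisj _ _) ?_ ?_ ?_
          · rw [← hEq]; exact subctx_none hctx hx
          · intro y hy; exact restrict_none (hFV y hy)
          · rw [← hEq]; exact ihM (subctx_extend hctx hA') hB'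
  | tens_I hE h12 h1D h2D hM1 hM2 ih1 ih2 =>
      intro Γ B hctx hAB
      obtain ⟨m, B₁, B₂, rfl, hc, hs1, hs2⟩ := qsub_tensor_inv hAB rfl
      obtain ⟨hEq, hsub12, hsubD⟩ := subctx_split (disj_union_left h1D h2D) hctx
      obtain ⟨hEq2, hsub1, hsub2⟩ := subctx_split h12 hsub12
      rw [hEq, hEq2]
      exact Types.tens_I (restrict_isExp hE hsubD) (restrict_disj h12 _ _)
        (restrict_disj h1D _ _) (restrict_disj h2D _ _)
        (ih1 (subctx_union hsub1 hsubD) (nbang_sub hs1 hc))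
        (ih2 (subctx_union hsub2 hsubD) (nbang_sub hs2 hc))
  | top_ =>
      intro Γ B hctx hAB
      obtain ⟨m, rfl⟩ := qsub_top_inv hAB rfl
      exact .top_
  | tens_E hE h12 h1D h2D hne hx1 hx2 hM hN ihM ihN =>
      intro Γ B hctx hAB
      obtain ⟨hEq, hsub12, hsubD⟩ := subctx_split (disj_union_left h1D h2D) hctx
      obtain ⟨hEq2, hsub1, hsub2⟩ := subctx_split h12 hsub12
      rw [hEq, hEq2]
      exact Types.tens_E (restrict_isExp hE hsubD) (restrict_disj h12 _ _)
        (restrict_disj h1D _ _) (restrict_disj h2D _ _) hne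
        (subctx_none (subctx_union hsub2 hsubD) hx1)
        (subctx_none (subctx_union hsub2 hsubD) hx2)
        (ihM (subctx_union hsub1 hsubD) (qsub_refl _))
        (ihN (subctx_extend (subctx_extend (subctx_union hsub2 hsubD) (qsub_refl _))
          (qsub_refl _)) hAB)

-- STATEMENT 14
theorem types_sub {Γ Δ : Ctx} {N : Term} {A B : QType}
    (hctx : Γ.SubCtx Δ) (h : Types Δ N A) (hAB : QSub A B) :
    Types Γ N B := types_sub_aux h hctx hAB
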